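/- Let G be the group presented by ⟨a, s, t | a² = 1, [a, t⁻¹at] = 1, [s,t] = 1, s⁻¹as = a·(t⁻¹at)⟩. Then for every integer l > 0, the elements a and s⁻ˡ a sˡ commute in G; that is, [a, a^{sˡ}] = 1 in G for all l > 0. -/

import Mathlib

/-!
Write `b k = t⁻ᵏ a tᵏ`. Conjugating the relation `[a, t⁻¹at] = 1` by `tᵏ` gives `[b k, b (k+1)] = 1`,
and since `s` commutes with `t` the last relation becomes `s⁻¹ (b k) s = b k * b (k+1)`.
Conjugating `[b k, b (k+d+1)] = 1` by `s` and cancelling the commutations already known shows,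
by a two-step induction on `d`, that the `b k` commute pairwise. So the subgroup they generate is
centralised by `a = b 0` and is stable under conjugation by `s`; it therefore contains every
`s⁻ⁿ a sⁿ`. Negative exponents reduce to positive ones by conjugating with `sⁿ`.
-/

/-- The three generators `a`, `s`, `t`. -/
inductive Gen : Type
  | a | s | t

/-- The relators of the presentation
`⟨a, s, t | a² = 1, [a, t⁻¹at] = 1, [s,t] = 1, s⁻¹as = a·(t⁻¹at)⟩`,
where `[x,y] = x⁻¹y⁻¹xy`. -/
def rels : Set (FreeGroup Gen) :=
  { (FreeGroup.of Gen.a) ^ 2,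
    (FreeGroup.of Gen.a)⁻¹ *
        ((FreeGroup.of Gen.t)⁻¹ * FreeGroup.of Gen.a * FreeGroup.of Gen.t)⁻¹ *
        FreeGroup.of Gen.a *
        ((FreeGroup.of Gen.t)⁻¹ * FreeGroup.of Gen.a * FreeGroup.of Gen.t),
    (FreeGroup.of Gen.s)⁻¹ * (FreeGroup.of Gen.t)⁻¹ * FreeGroup.of Gen.s * FreeGroup.of Gen.t,
    ((FreeGroup.of Gen.s)⁻¹ * FreeGroup.of Gen.a * FreeGroup.of Gen.s)⁻¹ *
        (FreeGroup.of Gen.a *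
          ((FreeGroup.of Gen.t)⁻¹ * FreeGroup.of Gen.a * FreeGroup.of Gen.t)) }

/-- The group `G` of the paper. -/
abbrev G := PresentedGroup rels

def a : G := PresentedGroup.of Gen.a
def s : G := PresentedGroup.of Gen.s
def t : G := PresentedGroup.of Gen.t

lemma commute_of_inv_mul_inv_mul_mul_eq_one {H : Type*} [Group H] {x y : H}
    (h : x⁻¹ * y⁻¹ * x * y = 1) : Commute x y := by
  rw [← Commute.inv_inv_iff, ← commutatorElement_eq_one_iff_commute, commutatorElement_def,
    inv_inv, inv_inv]
  exact h

lemma commute_a_conj_t : Commute a (t⁻¹ * a * t) := by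
  have h := PresentedGroup.one_of_mem (rels := rels)
    (Set.mem_insert_of_mem _ (Set.mem_insert _ _))
  simp only [map_mul, map_inv] at h
  exact commute_of_inv_mul_inv_mul_mul_eq_one h

lemma s_commute_t : Commute s t := by
  have h := PresentedGroup.one_of_mem (rels := rels)
    (Set.mem_insert_of_mem _ (Set.mem_insert_of_mem _ (Set.mem_insert _ _)))
  simp only [map_mul, map_inv] at h
  exact commute_of_inv_mul_inv_mul_mul_eq_one h

lemma conj_s_a : s⁻¹ * a * s = a * (t⁻¹ * a * t) := by
  have h := PresentedGroup.mk_eq_mk_of_inv_mul_mem (rels := rels)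
    (Set.mem_insert_of_mem _ (Set.mem_insert_of_mem _ (Set.mem_insert_of_mem _ rfl)))
  simp only [map_mul, map_inv] at h
  exact h

lemma Commute.of_mul_mul {H : Type*} [Group H] {x y u v : H} (hxu : Commute x u)
    (hy : Commute y (u * v)) (h : Commute (x * y) (u * v)) : Commute x v := by
  have hx : Commute x (u * v) := by simpa using h.mul_left hy.inv_left
  simpa using hxu.inv_right.mul_right hx

def b (k : ℕ) : G := (t ^ k)⁻¹ * a * t ^ k

lemma b_zero : b 0 = a := by simp [b]

lemma commute_b_b_succ (k : ℕ) : Commute (b k) (b (k + 1)) := by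
  have hb : b (k + 1) = (t ^ k)⁻¹ * (t⁻¹ * a * t) * t ^ k := by rw [b, pow_succ]; group
  rw [hb, b]
  simpa only [inv_inv] using (Commute.conj_iff (t ^ k)⁻¹).mpr commute_a_conj_t

lemma conj_s_b (k : ℕ) : s⁻¹ * b k * s = b k * b (k + 1) := by
  have hs : Commute s (t ^ k) := s_commute_t.pow_right k
  calc s⁻¹ * b k * s = (t ^ k * s)⁻¹ * a * (t ^ k * s) := by simp only [b]; group
    _ = (s * t ^ k)⁻¹ * a * (s * t ^ k) := by rw [hs.eq]
    _ = (t ^ k)⁻¹ * (s⁻¹ * a * s) * t ^ k := by group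
    _ = b k * b (k + 1) := by rw [conj_s_a]; simp only [b, pow_succ]; group

lemma commute_b_b_add (d : ℕ) : ∀ k, Commute (b k) (b (k + d)) := by
  induction d using Nat.twoStepInduction with
  | zero => exact fun k => Commute.refl _
  | one => exact commute_b_b_succ
  | more d h₀ h₁ =>
    intro k
    have hy : Commute (b (k + 1)) (b (k + (d + 1)) * b (k + (d + 2))) := by
      have h₀' := h₀ (k + 1)
      have h₁' := h₁ (k + 1)
      rw [show k + 1 + d = k + (d + 1) by omega] at h₀'
      rw [show k + 1 + (d + 1) = k + (d + 2) by omega] at h₁'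
      exact h₀'.mul_right h₁'
    have hs := (h₁ k).map (MulAut.conj s⁻¹)
    simp only [MulAut.conj_apply, inv_inv, conj_s_b] at hs
    exact (h₁ k).of_mul_mul hy hs

lemma closure_range_b_le_centralizer :
    Subgroup.closure (Set.range b) ≤ Subgroup.centralizer {a} := by
  rw [Subgroup.closure_le]
  rintro _ ⟨m, rfl⟩
  rw [SetLike.mem_coe, Subgroup.mem_centralizer_singleton_iff]
  simpa only [b_zero, zero_add] using (commute_b_b_add m 0).symm.eq

lemma closure_range_b_le_comap_conj_s :
    Subgroup.closure (Set.range b) ≤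
      (Subgroup.closure (Set.range b)).comap (MulAut.conj s⁻¹).toMonoidHom := by
  rw [Subgroup.closure_le]
  rintro _ ⟨k, rfl⟩
  simp only [SetLike.mem_coe, Subgroup.mem_comap, MulEquiv.coe_toMonoidHom, MulAut.conj_apply,
    inv_inv, conj_s_b]
  exact mul_mem (Subgroup.subset_closure ⟨k, rfl⟩) (Subgroup.subset_closure ⟨k + 1, rfl⟩)

lemma conj_s_pow_a_mem_closure_range_b (n : ℕ) :
    (s ^ n)⁻¹ * a * s ^ n ∈ Subgroup.closure (Set.range b) := by
  induction n with
  | zero =>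
    rw [pow_zero, inv_one, one_mul, mul_one, ← b_zero]
    exact Subgroup.subset_closure (Set.mem_range_self 0)
  | succ n ih =>
    have h := closure_range_b_le_comap_conj_s ih
    simp only [Subgroup.mem_comap, MulEquiv.coe_toMonoidHom, MulAut.conj_apply, inv_inv] at h
    convert h using 1
    rw [pow_succ]
    group

lemma commute_a_conj_s_pow (n : ℕ) : Commute a ((s ^ n)⁻¹ * a * s ^ n) :=
  (Subgroup.mem_centralizer_singleton_iff.mp
    (closure_range_b_le_centralizer (conj_s_pow_a_mem_closure_range_b n))).symm

theorem a_commute_conj_a_s_general (l : ℤ) :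
    Commute a ((s ^ l)⁻¹ * a * s ^ l) := by
  obtain ⟨n, rfl | rfl⟩ := Int.eq_nat_or_neg l
  · simpa only [zpow_natCast] using commute_a_conj_s_pow n
  · have h := (Commute.conj_iff (s ^ n)).mpr (commute_a_conj_s_pow n).symm
    rw [zpow_neg, zpow_natCast, inv_inv]
    convert h using 1
    group

/-- In `G`, the element `a` commutes with `a^{sˡ} = s⁻ˡ a sˡ` for every integer `l > 0`. -/
theorem a_commute_conj_a_s (l : ℤ) (hl : 0 < l) :
    Commute a ((s ^ l)⁻¹ * a * s ^ l) :=
  a_commute_conj_a_s_general l
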